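/- Let n ≥ 1 be an integer and γ > 0. There exists a constant c > 0 such that for every μ ≥ 1 and every smooth compactly supported function v : ℝⁿ → ℝ, one has ∫_{ℝⁿ} (|∇v(x)|² + μ |x|^{2γ} v(x)²) dx ≥ c · μ^{1/(1+γ)} · ∫_{ℝⁿ} v(x)² dx. -/

import Mathlib

open MeasureTheory

lemma aux_cs {n : ℕ} (L : EuclideanSpace ℝ (Fin n) →L[ℝ] ℝ) (a : Fin n → ℝ) :
    |∑ i, a i * L (EuclideanSpace.single i 1)| ≤ ‖L‖ * Real.sqrt (∑ i, (a i)^2) := by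
  set y : EuclideanSpace ℝ (Fin n) := (WithLp.equiv 2 _).symm a with hy
  have hyi : ∀ i, y i = a i := fun i => rfl
  have hexp : y = ∑ i, a i • EuclideanSpace.single i (1:ℝ) := by
    have h := (EuclideanSpace.basisFun (Fin n) ℝ).sum_repr y
    simp only [EuclideanSpace.basisFun_repr, EuclideanSpace.basisFun_apply, hyi] at h
    exact h.symm
  have hLy : L y = ∑ i, a i * L (EuclideanSpace.single i 1) := by
    rw [hexp, map_sum]
    simp [smul_eq_mul]
  have hny : ‖y‖ = Real.sqrt (∑ i, (a i)^2) := by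
    rw [EuclideanSpace.norm_eq]
    congr 1
    refine Finset.sum_congr rfl fun i _ => ?_
    rw [hyi, Real.norm_eq_abs, sq_abs]
  calc |∑ i, a i * L (EuclideanSpace.single i 1)| = ‖L y‖ := by rw [hLy]; rfl
    _ ≤ ‖L‖ * ‖y‖ := L.le_opNorm y
    _ = ‖L‖ * Real.sqrt (∑ i, (a i)^2) := by rw [hny]

set_option maxHeartbeats 4000000 in
/-- Uncertainty-type inequality: for every `μ ≥ 1` and every smooth compactly supported
`v : ℝⁿ → ℝ`, `∫ (|∇v|² + μ |x|^{2γ} v²) ≥ c μ^{1/(1+γ)} ∫ v²`. -/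
theorem uncertainty_lower_bound
    (n : ℕ) (hn : 1 ≤ n) (γ : ℝ) (hγ : 0 < γ) :
    ∃ c : ℝ, 0 < c ∧
      ∀ μ : ℝ, 1 ≤ μ →
        ∀ v : EuclideanSpace ℝ (Fin n) → ℝ,
          ContDiff ℝ (⊤ : ℕ∞) v → HasCompactSupport v →
          c * μ ^ (1 / (1 + γ)) * (∫ x, (v x) ^ 2) ≤
            ∫ x, (‖fderiv ℝ v x‖ ^ 2 + μ * ‖x‖ ^ (2 * γ) * (v x) ^ 2) := by
  classical
  refine ⟨1/100, by norm_num, ?_⟩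
  intro μ hμ v hv hvs
  have hμ0 : (0:ℝ) < μ := lt_of_lt_of_le one_pos hμ
  have hγ1 : (0:ℝ) < 1 + γ := by linarith
  have hnn : (1:ℝ) ≤ (n:ℝ) := by exact_mod_cast hn
  have hn0 : (0:ℝ) < (n:ℝ) := by linarith
  set M : ℝ := μ ^ (1/(1+γ)) with hMdef
  have hM0 : 0 < M := Real.rpow_pos_of_pos hμ0 _
  set ρ : ℝ := μ ^ (-(1/(2+2*γ))) with hρdef
  have hρ0 : 0 < ρ := Real.rpow_pos_of_pos hμ0 _
  set θ : ℝ := 1/(10*(n:ℝ)) with hθdef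
  have hθ0 : 0 < θ := by rw [hθdef]; positivity
  set t : ℝ := θ * M with htdef
  have ht0 : 0 < t := mul_pos hθ0 hM0
  -- rpow identities
  have key1 : μ * ρ ^ (2*γ) = M := by
    rw [hρdef, hMdef, ← Real.rpow_mul hμ0.le]
    nth_rewrite 1 [← Real.rpow_one μ]
    rw [← Real.rpow_add hμ0]
    congr 1
    have h1 : (2+2*γ) ≠ 0 := by positivity
    have h2 : (1+γ) ≠ 0 := by positivity
    field_simp
    ring
  have key2 : t^2 * ρ^2 = θ^2 * M := by
    rw [htdef, hρdef, hMdef]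
    rw [← Real.rpow_natCast (μ ^ (-(1/(2+2*γ)))) 2, ← Real.rpow_mul hμ0.le]
    rw [mul_pow, ← Real.rpow_natCast (μ ^ (1/(1+γ))) 2, ← Real.rpow_mul hμ0.le]
    rw [mul_assoc, ← Real.rpow_add hμ0]
    congr 2
    have h1 : (2+2*γ) ≠ 0 := by positivity
    have h2 : (1+γ) ≠ 0 := by positivity
    push_cast
    field_simp
    ring
  -- the vector field building blocks
  set φ : ℝ → ℝ := fun s => t * (ρ * Real.arctan (s/ρ)) with hφdef
  set ψ : ℝ → ℝ := fun s => t * (1 + (s/ρ)^2)⁻¹ with hψdef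
  have hφd : ∀ s, HasDerivAt φ (ψ s) s := by
    intro s
    have h1 : HasDerivAt (fun s : ℝ => s / ρ) (1/ρ) s := (hasDerivAt_id s).div_const ρ
    have h2 := (Real.hasDerivAt_arctan (s/ρ)).comp s h1
    have h3 := (h2.const_mul ρ).const_mul t
    refine h3.congr_deriv ?_
    rw [hψdef]
    field_simp
  have hφc : Continuous φ :=
    continuous_const.mul (continuous_const.mul
      (Real.continuous_arctan.comp (continuous_id.div_const ρ)))
  have hψc : Continuous ψ := by
    apply continuous_const.mul
    apply Continuous.inv₀
    · exact continuous_const.add ((continuous_id.div_const ρ).pow 2)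
    · intro s; positivity
  have hψ0 : ∀ s, 0 ≤ ψ s := by intro s; rw [hψdef]; positivity
  have hψhalf : ∀ s, s^2 ≤ ρ^2 → t/2 ≤ ψ s := by
    intro s hs
    have hq0 : (0:ℝ) ≤ (s/ρ)^2 := sq_nonneg _
    have hq : (s/ρ)^2 ≤ 1 := by
      rw [div_pow, div_le_one (by positivity)]; exact hs
    have h1 : (1:ℝ) + (s/ρ)^2 ≤ 2 := by linarith
    have h2 : (2:ℝ)⁻¹ ≤ (1+(s/ρ)^2)⁻¹ := by
      apply inv_anti₀ (by positivity) h1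
    calc t/2 = t * 2⁻¹ := by ring
      _ ≤ t * (1+(s/ρ)^2)⁻¹ := mul_le_mul_of_nonneg_left h2 ht0.le
      _ = ψ s := by rw [hψdef]
  have hφbound : ∀ s, (φ s)^2 ≤ 4*θ^2*M := by
    intro s
    have ha : |Real.arctan (s/ρ)| ≤ Real.pi/2 :=
      abs_le.2 ⟨(Real.neg_pi_div_two_lt_arctan _).le, (Real.arctan_lt_pi_div_two _).le⟩
    have ha2 : (Real.arctan (s/ρ))^2 ≤ (Real.pi/2)^2 := by
      rw [← sq_abs]; exact pow_le_pow_left₀ (abs_nonneg _) ha 2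
    have hpi : (Real.pi/2)^2 ≤ 4 := by nlinarith [Real.pi_le_four, Real.pi_pos]
    have harct4 : (Real.arctan (s/ρ))^2 ≤ 4 := le_trans ha2 hpi
    have ht2ρ2 : 0 ≤ t^2*ρ^2 := by positivity
    calc (φ s)^2 = t^2*ρ^2*(Real.arctan (s/ρ))^2 := by rw [hφdef]; ring
      _ ≤ t^2*ρ^2*4 := mul_le_mul_of_nonneg_left harct4 ht2ρ2
      _ = 4*θ^2*M := by rw [key2]; ring
  -- derivative facts for v
  have hvd : Differentiable ℝ v := hv.differentiable (by simp)
  have hvc : Continuous v := hvd.continuous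
  set Dv : EuclideanSpace ℝ (Fin n) → EuclideanSpace ℝ (Fin n) →L[ℝ] ℝ := fderiv ℝ v with hDvdef
  have hDvc : Continuous Dv := hv.continuous_fderiv (by simp)
  have hgderiv : ∀ x, HasFDerivAt (fun x => (v x)^2) ((2 * v x) • Dv x) x := by
    intro x
    have h := ((hvd x).hasFDerivAt).mul ((hvd x).hasFDerivAt)
    have h2 : (2 * v x) • Dv x = v x • fderiv ℝ v x + v x • fderiv ℝ v x := by
      rw [← add_smul, hDvdef]; ring_nf
    rw [h2]
    exact h.congr_of_eventuallyEq (Filter.Eventually.of_forall fun y => pow_two (v y))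
  have hgd : Differentiable ℝ (fun x => (v x)^2) := fun x => (hgderiv x).differentiableAt
  have hfideriv : ∀ (i : Fin n) x,
      HasFDerivAt (fun x : EuclideanSpace ℝ (Fin n) => φ (x i))
        (ψ (x i) • (EuclideanSpace.proj i : EuclideanSpace ℝ (Fin n) →L[ℝ] ℝ)) x :=
    fun i x => by
      have := (hφd (x i)).comp_hasFDerivAt x (EuclideanSpace.proj (𝕜 := ℝ) i).hasFDerivAt
      exact this
  -- the two families of integrands
  set A : Fin n → EuclideanSpace ℝ (Fin n) → ℝ := fun i x => ψ (x i) * (v x)^2 with hAdef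
  set B : Fin n → EuclideanSpace ℝ (Fin n) → ℝ :=
    fun i x => φ (x i) * ((2 * v x) * Dv x (EuclideanSpace.single i 1)) with hBdef
  -- compact supports and continuity, integrability
  have hv2cs : HasCompactSupport (fun x : EuclideanSpace ℝ (Fin n) => (v x)^2) :=
    hvs.comp_left (g := fun s : ℝ => s^2) (by simp)
  have hv2c : Continuous (fun x : EuclideanSpace ℝ (Fin n) => (v x)^2) := hvc.pow 2
  have hcoordc : ∀ i : Fin n, Continuous (fun x : EuclideanSpace ℝ (Fin n) => x i) :=
    fun i => (EuclideanSpace.proj (𝕜 := ℝ) i).continuous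
  have hA_int : ∀ i, Integrable (A i) volume := fun i =>
    ((hψc.comp (hcoordc i)).mul hv2c).integrable_of_hasCompactSupport hv2cs.mul_left
  have hDec : ∀ i : Fin n, Continuous (fun x => Dv x (EuclideanSpace.single i 1)) :=
    fun i => hDvc.clm_apply continuous_const
  have hDvcs : HasCompactSupport Dv := hvs.fderiv ℝ
  have hB_cs : ∀ i, HasCompactSupport (B i) := by
    intro i
    rw [hBdef]
    have h1 : HasCompactSupport (fun x : EuclideanSpace ℝ (Fin n) => (2 : ℝ) * v x) :=
      hvs.mul_left
    have h2 : HasCompactSupport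
        (fun x : EuclideanSpace ℝ (Fin n) => (2 * v x) * Dv x (EuclideanSpace.single i 1)) :=
      h1.mul_right
    exact h2.mul_left
  have hB_int : ∀ i, Integrable (B i) volume := fun i =>
    ((hφc.comp (hcoordc i)).mul ((continuous_const.mul hvc).mul (hDec i))).integrable_of_hasCompactSupport
      (hB_cs i)
  -- integration by parts: ∫ (A i + B i) = 0
  have hIBP : ∀ i, (∫ x, (A i x + B i x)) = 0 := by
    intro i
    have hfd : Differentiable ℝ (fun x : EuclideanSpace ℝ (Fin n) => φ (x i)) :=
      fun x => (hfideriv i x).differentiableAt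
    have e1 : (fun x : EuclideanSpace ℝ (Fin n) =>
        fderiv ℝ (fun x : EuclideanSpace ℝ (Fin n) => φ (x i)) x (EuclideanSpace.single i 1)
          * (v x)^2) = A i := by
      funext x
      rw [(hfideriv i x).fderiv, hAdef]
      simp
    have e2 : (fun x : EuclideanSpace ℝ (Fin n) =>
        φ (x i) * fderiv ℝ (fun x => (v x)^2) x (EuclideanSpace.single i 1)) = B i := by
      funext x
      rw [(hgderiv x).fderiv, hBdef]
      simp
    have h3 : Integrable (fun x : EuclideanSpace ℝ (Fin n) => φ (x i) * (v x)^2) volume :=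
      ((hφc.comp (hcoordc i)).mul hv2c).integrable_of_hasCompactSupport hv2cs.mul_left
    have h := integral_mul_fderiv_eq_neg_fderiv_mul_of_integrable
      (by rw [e1]; exact hA_int i) (by rw [e2]; exact hB_int i) h3 (fun x _ => hfd x) (fun x _ => hgd x)
    rw [e1, e2] at h
    rw [integral_add (hA_int i) (hB_int i), h]
    ring
  have hABsum_int : Integrable (fun x => ∑ i, (A i x + B i x)) volume :=
    integrable_finset_sum _ (fun i _ => (hA_int i).add (hB_int i))
  have hzero : (∫ x, ∑ i, (A i x + B i x)) = 0 := by
    rw [integral_finset_sum (f := fun i x => A i x + B i x) _ (fun i _ => (hA_int i).add (hB_int i))]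
    simp [hIBP]
  -- integrability of the main integrands
  have hI1 : Integrable (fun x : EuclideanSpace ℝ (Fin n) => ‖Dv x‖^2) volume := by
    apply (hDvc.norm.pow 2).integrable_of_hasCompactSupport
    exact hDvcs.comp_left (g := fun L : EuclideanSpace ℝ (Fin n) →L[ℝ] ℝ => ‖L‖^2) (by simp)
  have hI2 : Integrable (fun x : EuclideanSpace ℝ (Fin n) => μ * ‖x‖^(2*γ) * (v x)^2) volume := by
    apply Continuous.integrable_of_hasCompactSupport
    · exact (continuous_const.mul (continuous_norm.rpow_const
        (fun x => Or.inr (by positivity)))).mul hv2c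
    · exact hv2cs.mul_left
  -- the pointwise inequality
  have hfinal : ∀ x : EuclideanSpace ℝ (Fin n),
      (1/100)*M*(v x)^2 ≤ ‖Dv x‖^2 + μ*‖x‖^(2*γ)*(v x)^2 + ∑ i, (A i x + B i x) := by
    intro x
    set W : ℝ := μ * ‖x‖^(2*γ) with hWdef
    have hW0 : 0 ≤ W := by rw [hWdef]; positivity
    set S : ℝ := ∑ i, ψ (x i) with hSdef
    have hS0 : 0 ≤ S := Finset.sum_nonneg fun i _ => hψ0 _
    set G2 : ℝ := ∑ i, (φ (x i))^2 with hG2def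
    have hG20 : 0 ≤ G2 := Finset.sum_nonneg fun i _ => sq_nonneg _
    set P : ℝ := ∑ i, φ (x i) * Dv x (EuclideanSpace.single i 1) with hPdef
    have hsplit : ∑ i, (A i x + B i x) = S * (v x)^2 + (2 * v x) * P := by
      rw [hSdef, hPdef, Finset.sum_mul, Finset.mul_sum, ← Finset.sum_add_distrib]
      refine Finset.sum_congr rfl fun i _ => ?_
      simp only [hAdef, hBdef]
      ring
    have hP : abs P ≤ ‖Dv x‖ * Real.sqrt G2 := aux_cs (Dv x) (fun i => φ (x i))
    have hG2top : G2 ≤ 4*θ^2*M*(n:ℝ) := by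
      calc G2 ≤ ∑ _i : Fin n, 4*θ^2*M := Finset.sum_le_sum fun i _ => hφbound _
        _ = 4*θ^2*M*(n:ℝ) := by simp [Finset.sum_const, Finset.card_univ]; ring
    have hcross : -(‖Dv x‖^2 + G2*(v x)^2) ≤ (2 * v x) * P := by
      have h0 : -(abs ((2*v x)*P)) ≤ (2*v x)*P := neg_abs_le _
      have h1 : abs ((2*v x)*P) = 2*(abs (v x))*(abs P) := by
        rw [abs_mul, abs_mul, abs_two]
      have h2 : 2*(abs (v x))*(abs P) ≤ 2*(abs (v x))*(‖Dv x‖*Real.sqrt G2) :=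
        mul_le_mul_of_nonneg_left hP (by positivity)
      have h3 : 2*(abs (v x))*(‖Dv x‖*Real.sqrt G2) ≤ ‖Dv x‖^2 + G2*(v x)^2 := by
        nlinarith [sq_nonneg (‖Dv x‖ - (abs (v x))*Real.sqrt G2), Real.sq_sqrt hG20,
          sq_abs (v x), Real.sqrt_nonneg G2, abs_nonneg (v x), norm_nonneg (Dv x)]
      linarith
    -- the core scalar bound
    have hcore : M/100 ≤ W + S - G2 := by
      rcases le_or_gt ‖x‖ ρ with hcase | hcase
      · -- inside the ball
        have hx2 : ‖x‖^2 = ∑ j, (x j)^2 := by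
          rw [EuclideanSpace.norm_eq, Real.sq_sqrt (by positivity)]
          exact Finset.sum_congr rfl fun j _ => by rw [Real.norm_eq_abs, sq_abs]
        have hxi : ∀ i : Fin n, (x i)^2 ≤ ρ^2 := by
          intro i
          have h1 : (x i)^2 ≤ ‖x‖^2 := by
            rw [hx2]
            exact Finset.single_le_sum (f := fun j => (x j)^2) (fun j _ => sq_nonneg _) (Finset.mem_univ i)
          have h2 : ‖x‖^2 ≤ ρ^2 := pow_le_pow_left₀ (norm_nonneg x) hcase 2
          linarith
        have hSlow : (n:ℝ)*(t/2) ≤ S := by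
          rw [hSdef]
          calc (n:ℝ)*(t/2) = ∑ _i : Fin n, t/2 := by
                rw [Finset.sum_const, Finset.card_univ, Fintype.card_fin, nsmul_eq_mul]
            _ ≤ ∑ i, ψ (x i) := Finset.sum_le_sum fun i _ => hψhalf _ (hxi i)
        have hnum : M/100 ≤ (n:ℝ)*(t/2) - 4*θ^2*M*(n:ℝ) := by
          have heq : (n:ℝ)*(t/2) - 4*θ^2*M*(n:ℝ) = M*(1/20 - 1/(25*(n:ℝ))) := by
            rw [htdef, hθdef]
            field_simp
            ring
          rw [heq]
          have h25 : 1/(25*(n:ℝ)) ≤ 1/25 := by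
            apply div_le_div_of_nonneg_left (by norm_num) (by norm_num) (by linarith)
          have : M*(1/100) ≤ M*(1/20 - 1/(25*(n:ℝ))) := by
            apply mul_le_mul_of_nonneg_left _ hM0.le
            linarith
          linarith
        linarith
      · -- outside the ball
        have hWlow : M ≤ W := by
          rw [hWdef, ← key1]
          apply mul_le_mul_of_nonneg_left _ hμ0.le
          exact Real.rpow_le_rpow hρ0.le hcase.le (by positivity)
        have hG2small : G2 ≤ M/25 := by
          have heq : 4*θ^2*M*(n:ℝ) = M*(1/(25*(n:ℝ))) := by
            rw [hθdef]
            field_simp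
            ring
          have h25 : 1/(25*(n:ℝ)) ≤ 1/25 := by
            apply div_le_div_of_nonneg_left (by norm_num) (by norm_num) (by linarith)
          calc G2 ≤ 4*θ^2*M*(n:ℝ) := hG2top
            _ = M*(1/(25*(n:ℝ))) := heq
            _ ≤ M*(1/25) := mul_le_mul_of_nonneg_left h25 hM0.le
            _ = M/25 := by ring
        linarith
    have hmul : (M/100)*(v x)^2 ≤ (W + S - G2)*(v x)^2 :=
      mul_le_mul_of_nonneg_right hcore (sq_nonneg _)
    rw [hsplit]
    nlinarith [sq_nonneg (v x)]
  -- put everything together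
  have hLint : Integrable (fun x : EuclideanSpace ℝ (Fin n) => (1/100)*M*(v x)^2) volume := by
    apply Continuous.integrable_of_hasCompactSupport
    · exact continuous_const.mul hv2c
    · exact hv2cs.mul_left
  have hRint : Integrable (fun x : EuclideanSpace ℝ (Fin n) =>
      ‖Dv x‖^2 + μ*‖x‖^(2*γ)*(v x)^2 + ∑ i, (A i x + B i x)) volume :=
    (hI1.add hI2).add hABsum_int
  have hmono := integral_mono hLint hRint hfinal
  have hsplitI : (∫ x, (‖Dv x‖^2 + μ*‖x‖^(2*γ)*(v x)^2 + ∑ i, (A i x + B i x))) =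
      (∫ x, (‖Dv x‖^2 + μ*‖x‖^(2*γ)*(v x)^2)) + ∫ x, ∑ i, (A i x + B i x) :=
    integral_add (hI1.add hI2) hABsum_int
  have hconst : (∫ x, (1/100)*M*(v x)^2) = (1/100)*M*(∫ x, (v x)^2) := by
    rw [show (fun x : EuclideanSpace ℝ (Fin n) => (1/100)*M*(v x)^2)
        = (fun x : EuclideanSpace ℝ (Fin n) => ((1/100)*M)*(v x)^2) from by funext x; ring]
    exact integral_const_mul _ _
  calc (1/100) * M * (∫ x, (v x)^2) = ∫ x, (1/100)*M*(v x)^2 := hconst.symm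
    _ ≤ ∫ x, (‖Dv x‖^2 + μ*‖x‖^(2*γ)*(v x)^2 + ∑ i, (A i x + B i x)) := hmono
    _ = (∫ x, (‖Dv x‖^2 + μ*‖x‖^(2*γ)*(v x)^2)) + ∫ x, ∑ i, (A i x + B i x) := hsplitI
    _ = ∫ x, (‖Dv x‖^2 + μ*‖x‖^(2*γ)*(v x)^2) := by rw [hzero, add_zero]
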